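/- arXiv:1601.07760 — 2 statements merged into one kernel-verified Lean document; each statement's English description precedes it below -/
import Mathlib

section
/- For every quaternionic n×n matrix M, the Study determinant Sdet(M) = det(ψ(M)) is a nonnegative real number (i.e., the complex number det(ψ(M)) is real and ≥ 0). -/
open scoped Quaternion

/-- The simplex part of a quaternion `x = a + j·b`: the complex number `a = x₀ + x₁·i`. -/
noncomputable def qSimplex (x : ℍ[ℝ]) : ℂ := ⟨x.re, x.imI⟩

/-- The perplex part of a quaternion `x = a + j·b`: the complex number `b = x₂ − x₃·i`. -/
noncomputable def qPerplex (x : ℍ[ℝ]) : ℂ := ⟨x.imJ, -x.imK⟩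

/-- The simplex part of a quaternionic matrix. -/
noncomputable def matSimplex {α β : Type*} (M : Matrix α β ℍ[ℝ]) : Matrix α β ℂ :=
  Matrix.of fun r s => qSimplex (M r s)

/-- The perplex part of a quaternionic matrix. -/
noncomputable def matPerplex {α β : Type*} (M : Matrix α β ℍ[ℝ]) : Matrix α β ℂ :=
  Matrix.of fun r s => qPerplex (M r s)

/-- The complex-block representation `ψ(M) = [[Mˢ, −conj(Mᵖ)], [Mᵖ, conj(Mˢ)]]`
of a quaternionic matrix `M = Mˢ + j·Mᵖ`. -/
noncomputable def psi {α β : Type*} (M : Matrix α β ℍ[ℝ]) : Matrix (α ⊕ α) (β ⊕ β) ℂ :=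
  Matrix.fromBlocks (matSimplex M) (-(matPerplex M).map (starRingEnd ℂ))
    (matPerplex M) ((matSimplex M).map (starRingEnd ℂ))

/-- The Study determinant of a square quaternionic matrix: `Sdet(M) = det(ψ(M))`. -/
noncomputable def Sdet {α : Type*} [Fintype α] [DecidableEq α] (M : Matrix α α ℍ[ℝ]) : ℂ :=
  (psi M).det


/-!
`ψ` is multiplicative and respects block decompositions, so `Sdet` is multiplicative, unchanged
by row permutations and reindexing, and equal to `1` on block unitriangular matrices. If the last
column of `M` vanishes then so does a column of `ψ(M)`. Otherwise a row swap puts a nonzero pivot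
`q` in the corner, and the LDU factorisation through the Schur complement gives
`Sdet M = Sdet (A - B q⁻¹ C) · |q|²`, so induction on the size concludes.
-/

open Matrix ComplexConjugate

@[simp] lemma qSimplex_zero : qSimplex 0 = 0 := by
  simp [qSimplex, Complex.ext_iff]

@[simp] lemma qPerplex_zero : qPerplex 0 = 0 := by
  simp [qPerplex, Complex.ext_iff]

@[simp] lemma qSimplex_one : qSimplex 1 = 1 := by
  simp [qSimplex, Complex.ext_iff]

@[simp] lemma qPerplex_one : qPerplex 1 = 0 := by
  simp [qPerplex, Complex.ext_iff]

lemma qSimplex_add (x y : ℍ[ℝ]) : qSimplex (x + y) = qSimplex x + qSimplex y := by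
  simp [qSimplex, Complex.ext_iff]

lemma qPerplex_add (x y : ℍ[ℝ]) : qPerplex (x + y) = qPerplex x + qPerplex y := by
  simp [qPerplex, Complex.ext_iff, add_comm]

lemma qSimplex_sum {ι : Type*} (s : Finset ι) (f : ι → ℍ[ℝ]) :
    qSimplex (∑ i ∈ s, f i) = ∑ i ∈ s, qSimplex (f i) :=
  map_sum (AddMonoidHom.mk' qSimplex qSimplex_add) f s

lemma qPerplex_sum {ι : Type*} (s : Finset ι) (f : ι → ℍ[ℝ]) :
    qPerplex (∑ i ∈ s, f i) = ∑ i ∈ s, qPerplex (f i) :=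
  map_sum (AddMonoidHom.mk' qPerplex qPerplex_add) f s

lemma qSimplex_mul (x y : ℍ[ℝ]) :
    qSimplex (x * y) = qSimplex x * qSimplex y - conj (qPerplex x) * qPerplex y := by
  apply Complex.ext <;> simp [qSimplex, qPerplex] <;> ring

lemma qPerplex_mul (x y : ℍ[ℝ]) :
    qPerplex (x * y) = conj (qSimplex x) * qPerplex y + qPerplex x * qSimplex y := by
  apply Complex.ext <;> simp [qSimplex, qPerplex] <;> ring

lemma normSq_qSimplex_add_normSq_qPerplex (x : ℍ[ℝ]) :
    Complex.normSq (qSimplex x) + Complex.normSq (qPerplex x) = Quaternion.normSq x := by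
  simp [qSimplex, qPerplex, Complex.normSq_apply, Quaternion.normSq_def']; ring

section Blocks

variable {l m p : Type*}

lemma matSimplex_mul [Fintype m] (M : Matrix l m ℍ[ℝ]) (N : Matrix m p ℍ[ℝ]) :
    matSimplex (M * N) = matSimplex M * matSimplex N - (matPerplex M).map conj * matPerplex N := by
  ext i j
  simp [matSimplex, matPerplex, mul_apply, qSimplex_sum, qSimplex_mul]

lemma matPerplex_mul [Fintype m] (M : Matrix l m ℍ[ℝ]) (N : Matrix m p ℍ[ℝ]) :
    matPerplex (M * N) = (matSimplex M).map conj * matPerplex N + matPerplex M * matSimplex N := by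
  ext i j
  simp [matSimplex, matPerplex, mul_apply, qPerplex_sum, qPerplex_mul, Finset.sum_add_distrib]

lemma psi_mul [Fintype m] (M : Matrix l m ℍ[ℝ]) (N : Matrix m p ℍ[ℝ]) :
    psi (M * N) = psi M * psi N := by
  simp only [psi, fromBlocks_multiply, matSimplex_mul, matPerplex_mul,
    Matrix.map_neg _ (map_neg (starRingEnd ℂ)), Matrix.map_add _ (map_add (starRingEnd ℂ)),
    Matrix.map_mul, Matrix.map_map, Function.comp_def, Complex.conj_conj, Matrix.map_id',
    Matrix.mul_neg, Matrix.neg_mul, sub_eq_add_neg]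
  congr 1 <;> abel

@[simp] lemma psi_zero : psi (0 : Matrix l m ℍ[ℝ]) = 0 := by
  ext (i | i) (j | j) <;> simp [psi, matSimplex, matPerplex]

@[simp] lemma psi_one [DecidableEq m] : psi (1 : Matrix m m ℍ[ℝ]) = 1 := by
  ext (i | i) (j | j) <;> by_cases h : i = j <;>
    simp [psi, matSimplex, matPerplex, one_apply, h]

lemma psi_submatrix {l' m' : Type*} (M : Matrix l m ℍ[ℝ]) (f : l' → l) (g : m' → m) :
    psi (M.submatrix f g) = (psi M).submatrix (Sum.map f f) (Sum.map g g) := by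
  ext (i | i) (j | j) <;> rfl

lemma psi_fromBlocks {l' m' : Type*} (A : Matrix l m ℍ[ℝ]) (B : Matrix l m' ℍ[ℝ])
    (C : Matrix l' m ℍ[ℝ]) (D : Matrix l' m' ℍ[ℝ]) :
    psi (fromBlocks A B C D) = (fromBlocks (psi A) (psi B) (psi C) (psi D)).submatrix
      (Equiv.sumSumSumComm l l' l l') (Equiv.sumSumSumComm m m' m m') := by
  ext (i | i) (j | j) <;> rcases i with i | i <;> rcases j with j | j <;> rfl

variable [Fintype m] [DecidableEq m]

lemma Sdet_mul (M N : Matrix m m ℍ[ℝ]) : Sdet (M * N) = Sdet M * Sdet N := by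
  rw [Sdet, psi_mul, det_mul, Sdet, Sdet]

@[simp] lemma Sdet_one : Sdet (1 : Matrix m m ℍ[ℝ]) = 1 := by
  rw [Sdet, psi_one, det_one]

lemma Sdet_submatrix_equiv_self {l : Type*} [Fintype l] [DecidableEq l] (e : l ≃ m)
    (M : Matrix m m ℍ[ℝ]) : Sdet (M.submatrix e e) = Sdet M := by
  rw [Sdet, psi_submatrix]
  exact det_submatrix_equiv_self (e.sumCongr e) (psi M)

lemma Sdet_permute (σ : Equiv.Perm m) (M : Matrix m m ℍ[ℝ]) :
    Sdet (M.submatrix σ id) = Sdet M := by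
  rw [Sdet, psi_submatrix, Sum.map_id_id]
  refine (det_permute (σ.sumCongr σ) (psi M)).trans ?_
  rw [Equiv.Perm.sign_sumCongr, Int.units_mul_self, Units.val_one, Int.cast_one, one_mul, Sdet]

lemma Sdet_eq_zero_of_column_eq_zero (M : Matrix m m ℍ[ℝ]) (j : m) (h : ∀ i, M i j = 0) :
    Sdet M = 0 :=
  det_eq_zero_of_column_eq_zero (Sum.inl j) <| by
    rintro (i | i) <;> simp [psi, matSimplex, matPerplex, h]

lemma Sdet_fromBlocks_zero₂₁ {n : Type*} [Fintype n] [DecidableEq n] (A : Matrix m m ℍ[ℝ])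
    (B : Matrix m n ℍ[ℝ]) (D : Matrix n n ℍ[ℝ]) :
    Sdet (fromBlocks A B 0 D) = Sdet A * Sdet D := by
  rw [Sdet, psi_fromBlocks, det_submatrix_equiv_self, psi_zero, det_fromBlocks_zero₂₁, Sdet, Sdet]

lemma Sdet_fromBlocks_zero₁₂ {n : Type*} [Fintype n] [DecidableEq n] (A : Matrix m m ℍ[ℝ])
    (C : Matrix n m ℍ[ℝ]) (D : Matrix n n ℍ[ℝ]) :
    Sdet (fromBlocks A 0 C D) = Sdet A * Sdet D := by
  rw [Sdet, psi_fromBlocks, det_submatrix_equiv_self, psi_zero, det_fromBlocks_zero₁₂, Sdet, Sdet]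

lemma Sdet_fromBlocks_of_invertible₂₂ {n : Type*} [Fintype n] [DecidableEq n]
    (A : Matrix m m ℍ[ℝ]) (B : Matrix m n ℍ[ℝ]) (C : Matrix n m ℍ[ℝ]) (D : Matrix n n ℍ[ℝ])
    [Invertible D] : Sdet (fromBlocks A B C D) = Sdet (A - B * ⅟D * C) * Sdet D := by
  have ldu : fromBlocks A B C D =
      fromBlocks 1 (B * ⅟D) 0 1 * fromBlocks (A - B * ⅟D * C) 0 0 D *
        fromBlocks 1 0 (⅟D * C) 1 := by
    simp [fromBlocks_multiply, Matrix.mul_assoc, Matrix.mul_invOf_cancel_left]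
  simp only [ldu, Sdet_mul, Sdet_fromBlocks_zero₂₁, Sdet_fromBlocks_zero₁₂, Sdet_one, one_mul,
    mul_one]

lemma Sdet_unique [Unique m] (M : Matrix m m ℍ[ℝ]) :
    Sdet M = ((Quaternion.normSq (M default default) : ℝ) : ℂ) := by
  let e : Fin 2 ≃ m ⊕ m :=
    (finSumFinEquiv (m := 1) (n := 1)).symm.trans
      ((Equiv.ofUnique _ _).sumCongr (Equiv.ofUnique _ _))
  rw [Sdet, ← det_submatrix_equiv_self e, det_fin_two, ← normSq_qSimplex_add_normSq_qPerplex]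
  have e0 : e 0 = .inl default := rfl
  have e1 : e 1 = .inr default := rfl
  simp [e0, e1, psi, matSimplex, matPerplex, Complex.mul_conj, Complex.normSq_eq_conj_mul_self]

abbrev invertibleOfUnique {K : Type*} [DivisionRing K] [Unique m] (M : Matrix m m K)
    (h : M default default ≠ 0) : Invertible M where
  invOf := of fun _ _ => (M default default)⁻¹
  invOf_mul_self := by
    ext i j; simp [mul_apply, Unique.eq_default i, Unique.eq_default j, one_apply, h]
  mul_invOf_self := by
    ext i j; simp [mul_apply, Unique.eq_default i, Unique.eq_default j, one_apply, h]

end Blocks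

open ComplexOrder

lemma Sdet_fin_nonneg {n : ℕ} (M : Matrix (Fin n) (Fin n) ℍ[ℝ]) : 0 ≤ Sdet M := by
  induction n with
  | zero => simp [Sdet]
  | succ n ih =>
    rcases em (∀ i, M i (Fin.last n) = 0) with hcol | hcol
    · exact (Sdet_eq_zero_of_column_eq_zero M _ hcol).ge
    obtain ⟨i, hi⟩ := not_forall.mp hcol
    set N := (M.submatrix (Equiv.swap (Fin.last n) i) id).submatrix
      (finSumFinEquiv (n := 1)) (finSumFinEquiv (n := 1)) with hN
    have hSdet : Sdet M = Sdet N := by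
      rw [hN, Sdet_submatrix_equiv_self, Sdet_permute]
    have hpivot : N.toBlocks₂₂ default default ≠ 0 := by
      simpa [N, toBlocks₂₂, show Fin.natAdd n (0 : Fin 1) = Fin.last n from rfl] using hi
    let := invertibleOfUnique N.toBlocks₂₂ hpivot
    rw [hSdet, ← fromBlocks_toBlocks N, Sdet_fromBlocks_of_invertible₂₂, Sdet_unique N.toBlocks₂₂]
    exact mul_nonneg (ih _) (by exact_mod_cast Quaternion.normSq_nonneg)

lemma Sdet_nonneg {m : Type*} [Fintype m] [DecidableEq m] (M : Matrix m m ℍ[ℝ]) : 0 ≤ Sdet M := by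
  rw [← Sdet_submatrix_equiv_self (Fintype.equivFin m).symm M]
  exact Sdet_fin_nonneg _

theorem sdet_nonneg_real {n : ℕ} (M : Matrix (Fin n) (Fin n) ℍ[ℝ]) :
    ∃ r : ℝ, 0 ≤ r ∧ Sdet M = (r : ℂ) := by
  have h := Sdet_nonneg M
  exact ⟨(Sdet M).re, (Complex.nonneg_iff.mp h).1,
    Complex.eq_re_of_ofReal_le (Complex.ofReal_zero ▸ h)⟩
end

section
/- (Chen–Fox–Lyndon factorization) Let X be a finite nonempty totally ordered alphabet and order the words in X* lexicographically. Every nonempty word w ∈ X* admits a unique factorization w = l_1 l_2 ⋯ l_d where l_1, l_2, …, l_d are Lyndon words and l_1 ≥ l_2 ≥ ⋯ ≥ l_d. -/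
/-!
A nonempty word is Lyndon iff it is strictly smaller than each of its proper nonempty suffixes;
primitivity enters through the fact that two commuting words are powers of a common word. In this
form it is clear that `l ++ m` is Lyndon for Lyndon words `l < m`, so a factorization of `a :: w`
is obtained from one of `w` by merging `[a]` with the leading factors it is smaller than.
For uniqueness, the first factor `m` of a factorization is the longest Lyndon prefix of the word:
a longer Lyndon prefix `l` has a proper suffix `u` that is a prefix of some factor `m'`, and then
`l < u ≤ m' ≤ m ≤ l`.
-/

/-- A nonempty word is a *Lyndon word* if it is prime (not a power `v^r` with `r ≥ 2`)
and lexicographically minimal among all of its cyclic rotations. -/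
def IsLyndon {X : Type*} [LinearOrder X] (w : List X) : Prop :=
  w ≠ [] ∧ (∀ (v : List X) (r : ℕ), 2 ≤ r → w ≠ (List.replicate r v).flatten) ∧
    ∀ i : ℕ, w ≤ w.rotate i

namespace List

section Lex

variable {α : Type*} [LinearOrder α]

theorem append_lt_append_left_iff {u a b : List α} : u ++ a < u ++ b ↔ a < b := by
  refine ⟨fun h => ?_, append_left_lt⟩
  by_contra hab
  exact List.not_lt.mpr (append_left_le (List.not_lt.mp hab)) h

theorem append_lt_append_of_lt_of_not_prefix :
    ∀ {u v : List α}, u < v → ¬u <+: v → ∀ a b : List α, u ++ a < v ++ b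
  | [], _, _, hp, _, _ => absurd nil_prefix hp
  | _ :: _, [], h, _, _, _ => absurd h (not_lt_nil _)
  | c :: u, d :: v, h, hp, a, b => by
    rcases cons_lt_cons_iff.mp h with hcd | ⟨rfl, huv⟩
    · exact cons_lt_cons_iff.mpr (Or.inl hcd)
    · exact cons_lt_cons_iff.mpr
        (Or.inr ⟨rfl, append_lt_append_of_lt_of_not_prefix huv (by simpa using hp) a b⟩)

theorem append_lt_append_of_lt_of_length_le {u v : List α} (h : u < v)
    (hlen : v.length ≤ u.length) (a b : List α) : u ++ a < v ++ b :=
  append_lt_append_of_lt_of_not_prefix h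
    (fun hp => h.ne (hp.eq_of_length (le_antisymm hp.length_le hlen))) a b

-- Core's `IsPrefix.le` is about core's `≤` on lists, which is not definitionally the `≤` of
-- Mathlib's `LinearOrder (List α)`.
theorem IsPrefix.le_linearOrder {u v : List α} (h : u <+: v) : u ≤ v :=
  not_lt.mp h.le

end Lex

theorem exists_suffix_prefix_of_prefix_flatten {α : Type*} :
    ∀ {r : List α} {M : List (List α)}, r ≠ [] → r <+: M.flatten →
      ∃ m ∈ M, ∃ u, u ≠ [] ∧ u <:+ r ∧ u <+: m
  | _, [], hr, hp => absurd (prefix_nil.mp hp) hr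
  | r, m :: M, hr, hp => by
    rw [flatten_cons] at hp
    rcases le_or_gt r.length m.length with hle | hlt
    · exact ⟨m, mem_cons_self, r, hr, suffix_refl r,
        prefix_of_prefix_length_le hp (prefix_append m _) hle⟩
    obtain ⟨r', rfl⟩ := prefix_of_prefix_length_le (prefix_append m _) hp hlt.le
    have hr' : r' ≠ [] := by rintro rfl; simp_all
    obtain ⟨m', hm', u, hu, hur', hum'⟩ :=
      exists_suffix_prefix_of_prefix_flatten hr' ((prefix_append_right_inj m).mp hp)
    exact ⟨m', mem_cons_of_mem m hm', u, hu, hur'.trans (suffix_append m r'), hum'⟩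

theorem exists_flatten_replicate_of_append_comm {α : Type*} {p s : List α}
    (h : p ++ s = s ++ p) :
    ∃ (z : List α) (k m : ℕ), p = (replicate k z).flatten ∧ s = (replicate m z).flatten := by
  induction hn : p.length + s.length using Nat.strong_induction_on generalizing p s with
  | _ n ih =>
  wlog hle : p.length ≤ s.length generalizing p s
  · obtain ⟨z, k, m, hp, hs⟩ := this h.symm (by omega) (by omega)
    exact ⟨z, m, k, hs, hp⟩
  rcases eq_or_ne p [] with rfl | hp
  · exact ⟨s, 0, 1, by simp, by simp⟩
  obtain ⟨s', rfl⟩ : p <+: s := prefix_of_prefix_length_le (prefix_append p s)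
    (h ▸ prefix_append s p) hle
  have h' : p ++ s' = s' ++ p := by simpa using h
  obtain ⟨z, k, m, hpz, hsz⟩ := ih _ (by simp [← hn, length_pos_iff.mpr hp]) h' rfl
  exact ⟨z, k, k + m, hpz, by rw [replicate_add, flatten_append, ← hpz, ← hsz]⟩

end List

open List

section Lyndon

variable {α : Type*} [LinearOrder α]

theorem IsLyndon.lt_of_eq_append {w u v : List α} (hw : IsLyndon w) (huv : w = u ++ v)
    (hu : u ≠ []) (hv : v ≠ []) : w < v := by
  obtain ⟨-, hprim, hrot⟩ := hw
  subst huv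
  have hle_rotate : ∀ p s : List α, u ++ v = p ++ s → u ++ v ≤ s ++ p := fun p s h => by
    simpa only [h, rotate_append_length_eq] using hrot p.length
  have hlt : u ++ v < v ++ u := by
    refine lt_of_le_of_ne (hle_rotate u v rfl) fun hcomm => ?_
    obtain ⟨z, k, m, rfl, rfl⟩ := exists_flatten_replicate_of_append_comm hcomm
    have hk : k ≠ 0 := by rintro rfl; simp at hu
    have hm : m ≠ 0 := by rintro rfl; simp at hv
    exact hprim z (k + m) (by omega) (by rw [replicate_add, flatten_append])
  by_contra hge
  have hvw : v < u ++ v := lt_of_le_of_ne (not_lt.mp hge) fun h => by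
    simpa [hu] using congrArg length h
  by_cases hpre : v <+: u ++ v
  · -- `u ++ v = v ++ t`; comparing with the rotation `v ++ u` forces `t < u`, so the
    -- rotation `t ++ v` is smaller than `u ++ v`.
    obtain ⟨t, ht⟩ := hpre
    have htu : t < u := append_lt_append_left_iff.mp (ht ▸ hlt)
    have hlen : t.length = u.length := by
      have := congrArg length ht
      simp only [length_append] at this
      omega
    have := append_lt_append_of_lt_of_length_le htu hlen.ge v v
    exact not_le.mpr this (hle_rotate v t ht.symm)
  · have := append_lt_append_of_lt_of_not_prefix hvw hpre u []
    rw [append_nil] at this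
    exact not_lt.mpr this.le hlt

theorem isLyndon_of_forall_lt_of_eq_append {w : List α} (hw : w ≠ [])
    (h : ∀ u v, w = u ++ v → u ≠ [] → v ≠ [] → w < v) : IsLyndon w := by
  refine ⟨hw, ?_, fun i => ?_⟩
  · rintro v r hr rfl
    obtain ⟨r, rfl⟩ : ∃ r', r = r' + 2 := ⟨r - 2, by omega⟩
    have hv : v ≠ [] := by rintro rfl; simp at hw
    set t := (replicate (r + 1) v).flatten
    have ht : t ≠ [] := by simp [t, hv]
    have hvt : (replicate (r + 2) v).flatten = v ++ t := by
      rw [replicate_succ, flatten_cons]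
    have htv : (replicate (r + 2) v).flatten = t ++ v := by
      rw [replicate_succ', flatten_append, flatten_singleton]
    exact List.not_lt.mpr (htv ▸ prefix_append t v).le (h v t hvt hv ht)
  · rw [← rotate_mod]
    have hj : i % w.length < w.length := Nat.mod_lt _ (length_pos_iff.mpr hw)
    rcases Nat.eq_zero_or_pos (i % w.length) with h0 | h0
    · rw [h0, rotate_zero]
    rw [rotate_eq_drop_append_take hj.le]
    have hdrop : w < w.drop (i % w.length) :=
      h _ _ (take_append_drop _ w).symm (by simp [hw, h0.ne']) (by simp [hj])
    simpa using (append_lt_append_of_lt_of_length_le hdrop (by simp) [] (w.take _)).le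

theorem isLyndon_singleton (a : α) : IsLyndon [a] :=
  isLyndon_of_forall_lt_of_eq_append (cons_ne_nil a []) fun u v h hu hv => by
    have := congrArg length h
    simp only [length_singleton, length_append] at this
    have := length_pos_iff.mpr hu
    have := length_pos_iff.mpr hv
    omega

theorem IsLyndon.append {l m : List α} (hl : IsLyndon l) (hm : IsLyndon m) (hlm : l < m) :
    IsLyndon (l ++ m) := by
  have hlm_m : l ++ m < m := by
    by_cases hpre : l <+: m
    · obtain ⟨m', rfl⟩ := hpre
      have hm' : m' ≠ [] := by rintro rfl; simp at hlm
      exact append_lt_append_left_iff.mpr (hm.lt_of_eq_append rfl hl.1 hm')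
    · simpa using append_lt_append_of_lt_of_not_prefix hlm hpre m []
  refine isLyndon_of_forall_lt_of_eq_append (by simp [hl.1]) fun u v huv hu hv => ?_
  rcases append_eq_append_iff.mp huv with ⟨a, rfl, rfl⟩ | ⟨c, rfl, rfl⟩
  · rcases eq_or_ne a [] with rfl | ha
    · simpa using hlm_m
    · exact hlm_m.trans (hm.lt_of_eq_append rfl ha hv)
  · rcases eq_or_ne c [] with rfl | hc
    · simpa using hlm_m
    · exact append_lt_append_of_lt_of_length_le (hl.lt_of_eq_append rfl hu hc) (by simp) m m

end Lyndon

section Factorization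

variable {α : Type*} [LinearOrder α]

def IsLyndonFactorization (ls : List (List α)) : Prop :=
  (∀ l ∈ ls, IsLyndon l) ∧ ls.IsChain (· ≥ ·)

theorem IsLyndonFactorization.tail {l : List α} {ls : List (List α)}
    (h : IsLyndonFactorization (l :: ls)) : IsLyndonFactorization ls :=
  ⟨fun x hx => h.1 x (mem_cons_of_mem l hx), h.2.tail⟩

theorem IsLyndonFactorization.head_ne_nil {l : List α} {ls : List (List α)}
    (h : IsLyndonFactorization (l :: ls)) : l ≠ [] :=
  (h.1 l mem_cons_self).1

theorem IsLyndonFactorization.exists_flatten_eq_append {l : List α} (hl : IsLyndon l)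
    {ls : List (List α)} (hls : IsLyndonFactorization ls) :
    ∃ ls' : List (List α), ls'.flatten = l ++ ls.flatten ∧ IsLyndonFactorization ls' := by
  induction ls generalizing l with
  | nil => exact ⟨[l], by simp, by simpa [IsLyndonFactorization] using hl⟩
  | cons m ms ih =>
    by_cases hml : m ≤ l
    · exact ⟨l :: m :: ms, rfl, forall_mem_cons.mpr ⟨hl, hls.1⟩, hls.2.cons_cons hml⟩
    · obtain ⟨ls', hflat, hls'⟩ :=
        ih (hl.append (hls.1 m mem_cons_self) (not_le.mp hml)) hls.tail
      exact ⟨ls', by simp [hflat], hls'⟩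

theorem exists_isLyndonFactorization (w : List α) :
    ∃ ls : List (List α), ls.flatten = w ∧ IsLyndonFactorization ls := by
  induction w with
  | nil => exact ⟨[], rfl, by simp [IsLyndonFactorization]⟩
  | cons a w ih =>
    obtain ⟨ls, rfl, hls⟩ := ih
    exact hls.exists_flatten_eq_append (isLyndon_singleton a)

theorem IsLyndon.length_le_of_prefix_flatten {l m : List α} {M : List (List α)}
    (hl : IsLyndon l) (hM : IsLyndonFactorization (m :: M)) (hpre : l <+: m ++ M.flatten) :
    l.length ≤ m.length := by
  by_contra! hlen
  obtain ⟨r, rfl⟩ : m <+: l := prefix_of_prefix_length_le (prefix_append m _) hpre hlen.le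
  have hr : r ≠ [] := by rintro rfl; simp at hlen
  obtain ⟨m', hm', u, hu, ⟨x, rfl⟩, hum'⟩ :=
    exists_suffix_prefix_of_prefix_flatten hr ((prefix_append_right_inj m).mp hpre)
  refine lt_irrefl (m ++ (x ++ u)) ?_
  calc m ++ (x ++ u)
      < u := hl.lt_of_eq_append (append_assoc m x u).symm (by simp [hM.head_ne_nil]) hu
    _ ≤ m' := hum'.le_linearOrder
    _ ≤ m := (pairwise_cons.mp hM.2.pairwise).1 m' hm'
    _ ≤ m ++ (x ++ u) := (prefix_append m _).le_linearOrder

theorem IsLyndonFactorization.eq_of_flatten_eq {ls₁ ls₂ : List (List α)}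
    (h₁ : IsLyndonFactorization ls₁) (h₂ : IsLyndonFactorization ls₂)
    (h : ls₁.flatten = ls₂.flatten) : ls₁ = ls₂ := by
  induction ls₁ generalizing ls₂ with
  | nil =>
    cases ls₂ with
    | nil => rfl
    | cons m M => exact (h₂.head_ne_nil (flatten_eq_nil_iff.mp h.symm m mem_cons_self)).elim
  | cons l L ih =>
    cases ls₂ with
    | nil => exact (h₁.head_ne_nil (flatten_eq_nil_iff.mp h l mem_cons_self)).elim
    | cons m M =>
      have hw : l ++ L.flatten = m ++ M.flatten := h
      have hlm : l.length ≤ m.length :=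
        (h₁.1 l mem_cons_self).length_le_of_prefix_flatten h₂ (hw ▸ prefix_append l L.flatten)
      have hml : m.length ≤ l.length :=
        (h₂.1 m mem_cons_self).length_le_of_prefix_flatten h₁ (hw ▸ prefix_append m M.flatten)
      obtain rfl : l = m :=
        (prefix_of_prefix_length_le (prefix_append l L.flatten)
          (hw ▸ prefix_append m M.flatten) hlm).eq_of_length (le_antisymm hlm hml)
      rw [ih h₁.tail h₂.tail (append_cancel_left hw)]

end Factorization

theorem lyndon_factorization_general {X : Type*} [LinearOrder X] (w : List X) :
    ∃! ls : List (List X),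
      ls.flatten = w ∧ (∀ l ∈ ls, IsLyndon l) ∧ List.Chain' (fun a b => b ≤ a) ls := by
  obtain ⟨ls, hw, hls⟩ := exists_isLyndonFactorization w
  exact ⟨ls, ⟨hw, hls⟩, fun ls' ⟨hw', hls'⟩ =>
    IsLyndonFactorization.eq_of_flatten_eq hls' hls (hw'.trans hw.symm)⟩

/-- Chen–Fox–Lyndon: every nonempty word factorizes uniquely as a nonincreasing
product of Lyndon words. -/
theorem lyndon_factorization {X : Type*} [Fintype X] [Nonempty X] [LinearOrder X]
    (w : List X) (hw : w ≠ []) :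
    ∃! ls : List (List X),
      ls.flatten = w ∧ (∀ l ∈ ls, IsLyndon l) ∧ List.Chain' (fun a b => b ≤ a) ls :=
  lyndon_factorization_general w
end
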